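/- arXiv:1502.00246 — 2 statements merged into one kernel-verified Lean document; each statement's English description precedes it below -/
import Mathlib

section
/- Let 1 < p₁, p₂ < ∞ with 1/p = 1/p₁ + 1/p₂, and 1 ≤ q₁, q₂ ≤ ∞ and q = min{q₁, q₂}. Then for f ∈ L^{p₁,q₁} and g ∈ L^{p₂,q₂}, the product satisfies ‖f·g‖_{L^{p,q}} ≤ C ‖f‖_{L^{p₁,q₁}} ‖g‖_{L^{p₂,q₂}} for a constant C depending only on p₁, p₂, q₁, q₂. -/
open MeasureTheory Real Set
open scoped ENNReal BigOperators

/-- The Lorentz `L^{p,q}` quasinorm, defined through the distribution function: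
for `q = ∞` it is the weak-`L^p` quasinorm, and for finite `q` it is
`(∫₀^∞ (t μ{|f|>t}^{1/p})^q dt/t)^{1/q}`. -/
noncomputable def lorentzNorm {α : Type*} [MeasurableSpace α] (μ : Measure α) (p : ℝ)
    (q : ℝ≥0∞) (f : α → ℝ) : ℝ≥0∞ :=
  if q = ∞ then ⨆ t : ℝ, ⨆ _ : 0 < t, ENNReal.ofReal t * (μ {x | t < |f x|}) ^ (1 / p)
  else (∫⁻ t in Set.Ioi (0 : ℝ),
      (ENNReal.ofReal t * (μ {x | t < |f x|}) ^ (1 / p)) ^ q.toReal / ENNReal.ofReal t) ^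
      (1 / q.toReal)

/-!
Work with the decreasing rearrangement `f^*`. Since `|fg| > uv` forces `|f| > u` or `|g| > v`,
the distribution functions satisfy `d_{fg}(uv) ≤ d_f(u) + d_g(v)`, which yields O'Neil's
inequality `(fg)^*(s₁ + s₂) ≤ f^*(s₁) g^*(s₂)`. Computing the integral of
`q t^{q-1} (q/p) s^{q/p-1}` over `{(t, s) | s < d_f(t)}` in both orders (layer cake) gives
`p ‖f‖_{p,q}^q = ∫₀^∞ s^{q/p-1} f^*(s)^q ds`, while `‖g‖_{p,∞} = sup_s s^{1/p} g^*(s)`.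
Hence `(fg)^*(s) ≤ f^*(s/2) g^*(s/2) ≤ 2^{1/p₂} s^{-1/p₂} ‖g‖_{p₂,∞} f^*(s/2)`, and a dilation
`s ↦ 2s` bounds `‖fg‖_{p,q}` by `‖f‖_{p₁,q} ‖g‖_{p₂,∞}` (for `q = ∞` the same pointwise bound
suffices). Finally `‖g‖_{p₂,∞} ≲ ‖g‖_{p₂,q₂}`, which settles the case `q₁ ≤ q₂`; the other case is
symmetric.
-/

lemma lintegral_Ioo_ofReal_mul_rpow_sub_one {b c : ℝ} (hb : 0 ≤ b) (hc : 0 < c) :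
    ∫⁻ s in Ioo 0 b, ENNReal.ofReal (c * s ^ (c - 1)) = ENNReal.ofReal b ^ c := by
  have hint : IntervalIntegrable (fun s : ℝ => c * s ^ (c - 1)) volume 0 b :=
    (intervalIntegral.intervalIntegrable_rpow' (by linarith)).const_mul c
  have hval : ∫ s in (0:ℝ)..b, c * s ^ (c - 1) = b ^ c := by
    rw [intervalIntegral.integral_const_mul, integral_rpow (Or.inl (by linarith)), sub_add_cancel,
      Real.zero_rpow hc.ne', sub_zero, mul_div_cancel₀ _ hc.ne']
  have hnn : 0 ≤ᵐ[volume.restrict (Ioo 0 b)] fun s : ℝ => c * s ^ (c - 1) := by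
    filter_upwards [ae_restrict_mem measurableSet_Ioo] with s hs
    exact mul_nonneg hc.le (Real.rpow_nonneg hs.1.le _)
  rw [← ofReal_integral_eq_lintegral_ofReal
      (((intervalIntegrable_iff_integrableOn_Ioc_of_le hb).mp hint).mono_set Ioo_subset_Ioc_self)
      hnn, ← integral_Ioc_eq_integral_Ioo, ← intervalIntegral.integral_of_le hb, hval,
    ENNReal.ofReal_rpow_of_nonneg hb hc.le]

lemma lintegral_Ioi_ofReal_mul_rpow_sub_one {c : ℝ} (hc : 0 < c) :
    ∫⁻ s in Ioi 0, ENNReal.ofReal (c * s ^ (c - 1)) = ∞ := by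
  refine ENNReal.eq_top_of_forall_nnreal_le fun r => ?_
  calc (r : ℝ≥0∞) = ENNReal.ofReal ((r : ℝ) ^ c⁻¹) ^ c := by
        rw [ENNReal.ofReal_rpow_of_nonneg (by positivity) hc.le, ← Real.rpow_mul r.coe_nonneg,
          inv_mul_cancel₀ hc.ne', Real.rpow_one, ENNReal.ofReal_coe_nnreal]
    _ = ∫⁻ s in Ioo 0 ((r : ℝ) ^ c⁻¹), ENNReal.ofReal (c * s ^ (c - 1)) :=
        (lintegral_Ioo_ofReal_mul_rpow_sub_one (by positivity) hc).symm
    _ ≤ _ := lintegral_mono_set Ioo_subset_Ioi_self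

lemma volume_setOf_ofReal_lt_inter_Ioi (a : ℝ≥0∞) :
    volume ({s : ℝ | ENNReal.ofReal s < a} ∩ Ioi 0) = a := by
  rcases eq_or_ne a ∞ with rfl | ha
  · simp [ENNReal.ofReal_lt_top]
  · have : {s : ℝ | ENNReal.ofReal s < a} ∩ Ioi 0 = Ioo 0 a.toReal := by
      ext s
      exact ⟨fun h => ⟨h.2, (ENNReal.ofReal_lt_iff_lt_toReal h.2.le ha).mp h.1⟩,
        fun h => ⟨(ENNReal.ofReal_lt_iff_lt_toReal h.1.le ha).mpr h.2, h.1⟩⟩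
    rw [this, Real.volume_Ioo, sub_zero, ENNReal.ofReal_toReal ha]

lemma IsLowerSet.setLIntegral_inter_Ioi_ofReal_mul_rpow_sub_one {S : Set ℝ} (hS : IsLowerSet S)
    {c : ℝ} (hc : 0 < c) :
    ∫⁻ s in S ∩ Ioi 0, ENNReal.ofReal (c * s ^ (c - 1)) = volume (S ∩ Ioi 0) ^ c := by
  by_cases hbdd : BddAbove S
  · rcases (S ∩ Ioi 0).eq_empty_or_nonempty with hempty | ⟨x, hxS, hx⟩
    · simp [hempty, ENNReal.zero_rpow_of_pos hc]
    set b := sSup S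
    have hIoo : Ioo 0 b ⊆ S ∩ Ioi 0 := fun y hy =>
      ⟨let ⟨_, hzS, hyz⟩ := exists_lt_of_lt_csSup ⟨x, hxS⟩ hy.2; hS hyz.le hzS, hy.1⟩
    have hIoc : volume (S ∩ Ioi 0) ≤ volume (Ioc 0 b) :=
      measure_mono fun y hy => ⟨hy.2, le_csSup hbdd hy.1⟩
    have hae : Ioo 0 b =ᵐ[volume] (S ∩ Ioi 0 : Set ℝ) :=
      ae_eq_of_subset_of_measure_ge hIoo (by rwa [Real.volume_Ioo, ← Real.volume_Ioc])
        measurableSet_Ioo.nullMeasurableSet (hIoc.trans_lt measure_Ioc_lt_top).ne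
    rw [← setLIntegral_congr hae, ← measure_congr hae, Real.volume_Ioo, sub_zero,
      lintegral_Ioo_ofReal_mul_rpow_sub_one (hx.le.trans (le_csSup hbdd hxS)) hc]
  · have hS' : S ∩ Ioi 0 = Ioi 0 := by
      refine inter_eq_right.mpr fun y _ => ?_
      obtain ⟨x, hxS, hyx⟩ := not_bddAbove_iff.mp hbdd y
      exact hS hyx.le hxS
    simp [hS', lintegral_Ioi_ofReal_mul_rpow_sub_one hc, ENNReal.top_rpow_of_pos hc]

lemma ofReal_mul_rpow_sub_one {c t : ℝ} (hc : 0 ≤ c) (ht : 0 < t) :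
    ENNReal.ofReal (c * t ^ (c - 1)) = ENNReal.ofReal c * ENNReal.ofReal t ^ (c - 1) := by
  rw [ENNReal.ofReal_mul hc, ENNReal.ofReal_rpow_of_pos ht]

/-- Both sides are the integral of `a t^{a-1} b s^{b-1}` over `{(t, s) | s < φ t}` in the
quadrant, computed in the two orders. -/
theorem Antitone.lintegral_layercake_rpow {φ : ℝ → ℝ≥0∞} (hφ : Antitone φ) {a b : ℝ}
    (ha : 0 < a) (hb : 0 < b) :
    ENNReal.ofReal a * ∫⁻ t in Ioi 0, ENNReal.ofReal t ^ (a - 1) * φ t ^ b =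
      ENNReal.ofReal b * ∫⁻ s in Ioi 0,
        ENNReal.ofReal s ^ (b - 1) * volume ({t | ENNReal.ofReal s < φ t} ∩ Ioi 0) ^ a := by
  set T := {q : ℝ × ℝ | ENNReal.ofReal q.2 < φ q.1}
  set g : ℝ × ℝ → ℝ≥0∞ := fun q =>
    ENNReal.ofReal (a * q.1 ^ (a - 1)) * ENNReal.ofReal (b * q.2 ^ (b - 1))
  have hT : MeasurableSet T := measurableSet_lt (ENNReal.measurable_ofReal.comp measurable_snd)
    (hφ.measurable.comp measurable_fst)
  have hg : Measurable (T.indicator g) := by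
    refine Measurable.indicator ?_ hT
    fun_prop
  have inner_s (t : ℝ) : ∫⁻ s in Ioi 0, T.indicator g (t, s) =
      ENNReal.ofReal (a * t ^ (a - 1)) * φ t ^ b := by
    have hS : MeasurableSet {s : ℝ | ENNReal.ofReal s < φ t} :=
      measurableSet_lt ENNReal.measurable_ofReal measurable_const
    change ∫⁻ s in Ioi 0, {s | ENNReal.ofReal s < φ t}.indicator (fun s => g (t, s)) s = _
    simp only [g]
    rw [lintegral_indicator hS, Measure.restrict_restrict hS,
      lintegral_const_mul' _ _ ENNReal.ofReal_ne_top,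
      IsLowerSet.setLIntegral_inter_Ioi_ofReal_mul_rpow_sub_one (S := {s | ENNReal.ofReal s < φ t})
        (fun x y hyx hx => (ENNReal.ofReal_le_ofReal hyx).trans_lt hx) hb,
      volume_setOf_ofReal_lt_inter_Ioi]
  have inner_t (s : ℝ) : ∫⁻ t in Ioi 0, T.indicator g (t, s) =
      ENNReal.ofReal (b * s ^ (b - 1)) * volume ({t | ENNReal.ofReal s < φ t} ∩ Ioi 0) ^ a := by
    have hS : MeasurableSet {t : ℝ | ENNReal.ofReal s < φ t} :=
      measurableSet_lt measurable_const hφ.measurable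
    change ∫⁻ t in Ioi 0, {t | ENNReal.ofReal s < φ t}.indicator (fun t => g (t, s)) t = _
    simp only [g, mul_comm (ENNReal.ofReal (a * _))]
    rw [lintegral_indicator hS, Measure.restrict_restrict hS,
      lintegral_const_mul' _ _ ENNReal.ofReal_ne_top,
      IsLowerSet.setLIntegral_inter_Ioi_ofReal_mul_rpow_sub_one (S := {t | ENNReal.ofReal s < φ t})
        (fun x y hyx hx => hx.trans_le (hφ hyx)) ha]
  calc ENNReal.ofReal a * ∫⁻ t in Ioi 0, ENNReal.ofReal t ^ (a - 1) * φ t ^ b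
      = ∫⁻ t in Ioi 0, ∫⁻ s in Ioi 0, T.indicator g (t, s) := by
        rw [← lintegral_const_mul' _ _ ENNReal.ofReal_ne_top]
        refine setLIntegral_congr_fun measurableSet_Ioi fun t ht => ?_
        rw [inner_s, ofReal_mul_rpow_sub_one ha.le ht, mul_assoc]
    _ = ∫⁻ s in Ioi 0, ∫⁻ t in Ioi 0, T.indicator g (t, s) :=
        lintegral_lintegral_swap (hg.comp measurable_id).aemeasurable
    _ = _ := by
        rw [← lintegral_const_mul' _ _ ENNReal.ofReal_ne_top]
        refine setLIntegral_congr_fun measurableSet_Ioi fun s hs => ?_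
        rw [inner_t, ofReal_mul_rpow_sub_one hb.le hs, mul_assoc]

lemma setLIntegral_Ioi_rpow_mul_comp_div {F : ℝ → ℝ≥0∞} (hF : Measurable F) {a : ℝ}
    (ha : 0 < a) (c : ℝ) :
    ∫⁻ s in Ioi 0, ENNReal.ofReal s ^ c * F (s / a) =
      ENNReal.ofReal a ^ (c + 1) * ∫⁻ s in Ioi 0, ENNReal.ofReal s ^ c * F s := by
  set G := (Ioi (0 : ℝ)).indicator fun s => ENNReal.ofReal s ^ c * F s
  have hG : Measurable G :=
    (by fun_prop : Measurable fun s => ENNReal.ofReal s ^ c * F s).indicator measurableSet_Ioi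
  have hcomp (s : ℝ) : (Ioi (0 : ℝ)).indicator (fun s => ENNReal.ofReal s ^ c * F (s / a)) s =
      ENNReal.ofReal a ^ c * G (a⁻¹ * s) := by
    rcases lt_or_ge 0 s with hs | hs
    · have has : 0 < a⁻¹ * s := by positivity
      simp only [G, indicator_of_mem (mem_Ioi.mpr hs), indicator_of_mem (mem_Ioi.mpr has)]
      rw [div_eq_inv_mul, ← mul_assoc,
        ← ENNReal.mul_rpow_of_ne_zero (by positivity) (by positivity),
        ← ENNReal.ofReal_mul ha.le, mul_inv_cancel_left₀ ha.ne']
    · have has : a⁻¹ * s ≤ 0 := mul_nonpos_of_nonneg_of_nonpos (by positivity) hs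
      simp only [G, indicator_of_notMem (show s ∉ Ioi 0 from not_lt.mpr hs),
        indicator_of_notMem (show a⁻¹ * s ∉ Ioi 0 from not_lt.mpr has), mul_zero]
  rw [← lintegral_indicator measurableSet_Ioi, lintegral_congr hcomp,
    lintegral_const_mul (f := fun s => G (a⁻¹ * s)) _ (hG.comp (measurable_const_mul a⁻¹)),
    ← lintegral_map hG (measurable_const_mul _), Real.map_volume_mul_left (inv_ne_zero ha.ne'),
    lintegral_smul_measure, lintegral_indicator measurableSet_Ioi, inv_inv, abs_of_pos ha,
    smul_eq_mul, ← mul_assoc, ENNReal.rpow_add _ _ (by positivity) ENNReal.ofReal_ne_top,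
    ENNReal.rpow_one]

section Rearrangement

variable {α : Type*} [MeasurableSpace α] {μ : Measure α} {f g : α → ℝ} {s t : ℝ}

def distribution (μ : Measure α) (f : α → ℝ) (t : ℝ) : ℝ≥0∞ := μ {x | t < |f x|}

/-- The decreasing rearrangement `f^*(s) = inf {t ≥ 0 | d_f(t) ≤ s}`, computed as the length of
`{t > 0 | d_f(t) > s}`, an interval starting at `0`. -/
noncomputable def rearrangement (μ : Measure α) (f : α → ℝ) (s : ℝ) : ℝ≥0∞ :=
  volume ({t | ENNReal.ofReal s < distribution μ f t} ∩ Ioi 0)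

lemma distribution_antitone (f : α → ℝ) : Antitone (distribution μ f) :=
  fun _ _ hst => measure_mono fun _ hx => hst.trans_lt hx

lemma rearrangement_antitone (f : α → ℝ) : Antitone (rearrangement μ f) :=
  fun _ _ hss' => measure_mono fun _ ht => ⟨(ENNReal.ofReal_le_ofReal hss').trans_lt ht.1, ht.2⟩

@[fun_prop]
lemma measurable_rearrangement (μ : Measure α) (f : α → ℝ) : Measurable (rearrangement μ f) :=
  (rearrangement_antitone f).measurable

lemma distribution_mul_le {u v : ℝ} (hu : 0 ≤ u) :
    distribution μ (fun x => f x * g x) (u * v) ≤ distribution μ f u + distribution μ g v := by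
  refine (measure_mono fun x hx => ?_).trans (measure_union_le _ _)
  by_contra! h
  simp only [mem_union, mem_ofPred_eq, not_or, not_lt] at h
  exact (mul_le_mul h.1 h.2 (abs_nonneg _) hu).not_gt (abs_mul (f x) (g x) ▸ hx)

lemma distribution_mul_le_distribution_zero_left (ht : 0 ≤ t) :
    distribution μ (fun x => f x * g x) t ≤ distribution μ f 0 :=
  measure_mono fun _ hx => abs_pos.mpr (left_ne_zero_of_mul (abs_pos.mp (ht.trans_lt hx)))

lemma distribution_mul_le_distribution_zero_right (ht : 0 ≤ t) :
    distribution μ (fun x => f x * g x) t ≤ distribution μ g 0 :=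
  measure_mono fun _ hx => abs_pos.mpr (right_ne_zero_of_mul (abs_pos.mp (ht.trans_lt hx)))

lemma exists_lt_distribution {a : ℝ≥0∞} (h : a < distribution μ f t) :
    ∃ t' > t, a < distribution μ f t' := by
  have hmono : Monotone fun n : ℕ => {x | t + 1 / ((n : ℝ) + 1) < |f x|} :=
    fun m n hmn x (hx : t + 1 / ((m : ℝ) + 1) < |f x|) =>
      show t + 1 / ((n : ℝ) + 1) < |f x| from lt_of_le_of_lt (by gcongr) hx
  have hunion : {x | t < |f x|} = ⋃ n : ℕ, {x | t + 1 / ((n : ℝ) + 1) < |f x|} := by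
    ext x
    simp only [mem_ofPred_eq, mem_iUnion]
    refine ⟨fun hx => ?_, fun ⟨n, hn⟩ => lt_of_le_of_lt (by simp; positivity) hn⟩
    obtain ⟨n, hn⟩ := exists_nat_one_div_lt (sub_pos.mpr hx)
    exact ⟨n, by linarith⟩
  rw [distribution, hunion, hmono.measure_iUnion] at h
  obtain ⟨n, hn⟩ := lt_iSup_iff.mp h
  exact ⟨t + 1 / ((n : ℝ) + 1), by simp; positivity, hn⟩

lemma ofReal_le_rearrangement (h : ENNReal.ofReal s < distribution μ f t) :
    ENNReal.ofReal t ≤ rearrangement μ f s :=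
  calc ENNReal.ofReal t = volume (Ioo 0 t) := by rw [Real.volume_Ioo, sub_zero]
    _ ≤ volume ({t | ENNReal.ofReal s < distribution μ f t} ∩ Ioi 0) :=
        measure_mono fun _ hy => ⟨h.trans_le (distribution_antitone f hy.2.le), hy.1⟩

lemma rearrangement_le_of_forall {A : ℝ≥0∞}
    (h : ∀ t > 0, ENNReal.ofReal s < distribution μ f t → ENNReal.ofReal t ≤ A) :
    rearrangement μ f s ≤ A := by
  rcases eq_or_ne A ∞ with rfl | hA
  · exact le_top
  calc rearrangement μ f s ≤ volume (Ioc 0 A.toReal) :=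
        measure_mono fun t ht => ⟨ht.2, (ENNReal.ofReal_le_iff_le_toReal hA).mp (h t ht.2 ht.1)⟩
    _ = A := by rw [Real.volume_Ioc, sub_zero, ENNReal.ofReal_toReal hA]

lemma distribution_le_of_rearrangement_le (ht : 0 ≤ t)
    (h : rearrangement μ f s ≤ ENNReal.ofReal t) : distribution μ f t ≤ ENNReal.ofReal s := by
  by_contra! hlt
  obtain ⟨t', htt', hlt'⟩ := exists_lt_distribution hlt
  have := (ofReal_le_rearrangement hlt').trans h
  exact htt'.not_ge ((ENNReal.ofReal_le_ofReal_iff ht).mp this)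

theorem rearrangement_mul_le {s₁ s₂ : ℝ} (hs₁ : 0 ≤ s₁) (hs₂ : 0 ≤ s₂) :
    rearrangement μ (fun x => f x * g x) (s₁ + s₂) ≤
      rearrangement μ f s₁ * rearrangement μ g s₂ := by
  refine rearrangement_le_of_forall fun t ht hlt => ?_
  by_contra! hprod
  refine hlt.not_ge ?_
  rw [ENNReal.ofReal_add hs₁ hs₂]
  -- If `f^*(s₁) = 0`, then `f` vanishes outside a set of measure at most `s₁`.
  rcases eq_or_ne (rearrangement μ f s₁) 0 with hf | hf
  · exact (distribution_mul_le_distribution_zero_left ht.le).trans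
      ((distribution_le_of_rearrangement_le le_rfl (by simp [hf])).trans le_self_add)
  rcases eq_or_ne (rearrangement μ g s₂) 0 with hg | hg
  · exact (distribution_mul_le_distribution_zero_right ht.le).trans
      ((distribution_le_of_rearrangement_le le_rfl (by simp [hg])).trans le_add_self)
  have hg_top : rearrangement μ g s₂ ≠ ∞ := by
    rintro hg_top
    simp [hg_top, ENNReal.mul_top hf] at hprod
  set v := (rearrangement μ g s₂).toReal
  have hv : 0 < v := ENNReal.toReal_pos hg hg_top
  have hf_le : rearrangement μ f s₁ ≤ ENNReal.ofReal (t / v) := by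
    rw [ENNReal.ofReal_div_of_pos hv, ENNReal.ofReal_toReal hg_top,
      ENNReal.le_div_iff_mul_le (Or.inl hg) (Or.inl hg_top)]
    exact hprod.le
  calc distribution μ (fun x => f x * g x) t
      = distribution μ (fun x => f x * g x) (t / v * v) := by rw [div_mul_cancel₀ _ hv.ne']
    _ ≤ distribution μ f (t / v) + distribution μ g v := distribution_mul_le (by positivity)
    _ ≤ ENNReal.ofReal s₁ + ENNReal.ofReal s₂ :=
        add_le_add (distribution_le_of_rearrangement_le (by positivity) hf_le)
          (distribution_le_of_rearrangement_le hv.le (ENNReal.ofReal_toReal hg_top).ge)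

lemma rearrangement_mul_le_half (μ : Measure α) (f g : α → ℝ) (hs : 0 ≤ s) :
    rearrangement μ (fun x => f x * g x) s ≤
      rearrangement μ f (s / 2) * rearrangement μ g (s / 2) := by
  simpa using rearrangement_mul_le (μ := μ) (f := f) (g := g)
    (by positivity : (0 : ℝ) ≤ s / 2) (by positivity : (0 : ℝ) ≤ s / 2)

end Rearrangement

section Lorentz

variable {α : Type*} [MeasurableSpace α] {μ : Measure α} {f : α → ℝ} {p s : ℝ}

lemma lorentzNorm_top_eq (μ : Measure α) (p : ℝ) (f : α → ℝ) :
    lorentzNorm μ p ∞ f = ⨆ t > 0, ENNReal.ofReal t * distribution μ f t ^ (1 / p) :=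
  if_pos rfl

lemma ofReal_mul_distribution_rpow_le_lorentzNorm_top {t : ℝ} (ht : 0 < t) :
    ENNReal.ofReal t * distribution μ f t ^ (1 / p) ≤ lorentzNorm μ p ∞ f :=
  lorentzNorm_top_eq μ p f ▸ le_iSup₂ (f := fun t (_ : 0 < t) =>
    ENNReal.ofReal t * distribution μ f t ^ (1 / p)) t ht

lemma ofReal_rpow_mul_rearrangement_le_lorentzNorm_top (hp : 0 < p) (hs : 0 < s) :
    ENNReal.ofReal s ^ (1 / p) * rearrangement μ f s ≤ lorentzNorm μ p ∞ f := by
  have h0 : ENNReal.ofReal s ^ (1 / p) ≠ 0 := by positivity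
  have htop : ENNReal.ofReal s ^ (1 / p) ≠ ∞ := by simp [hp.le]
  rw [mul_comm, ← ENNReal.le_div_iff_mul_le (Or.inl h0) (Or.inl htop)]
  refine rearrangement_le_of_forall fun t ht hlt => ?_
  rw [ENNReal.le_div_iff_mul_le (Or.inl h0) (Or.inl htop)]
  calc ENNReal.ofReal t * ENNReal.ofReal s ^ (1 / p)
      ≤ ENNReal.ofReal t * distribution μ f t ^ (1 / p) := by gcongr
    _ ≤ lorentzNorm μ p ∞ f := ofReal_mul_distribution_rpow_le_lorentzNorm_top ht

lemma lorentzNorm_top_le_of_forall_rearrangement {M : ℝ≥0∞} (hp : 0 < p)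
    (h : ∀ s > 0, ENNReal.ofReal s ^ (1 / p) * rearrangement μ f s ≤ M) :
    lorentzNorm μ p ∞ f ≤ M := by
  rw [lorentzNorm_top_eq]
  refine iSup₂_le fun t ht => ?_
  have h0 : ENNReal.ofReal t ≠ 0 := by positivity
  rw [mul_comm, ← ENNReal.le_div_iff_mul_le (Or.inl h0) (Or.inl ENNReal.ofReal_ne_top), one_div,
    ENNReal.rpow_inv_le_iff hp]
  refine ENNReal.le_of_forall_nnreal_lt fun r hr => ?_
  rcases eq_or_ne r 0 with rfl | hr0
  · exact zero_le
  rw [← ENNReal.rpow_inv_le_iff hp,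
    ENNReal.le_div_iff_mul_le (Or.inl h0) (Or.inl ENNReal.ofReal_ne_top)]
  rw [← ENNReal.ofReal_coe_nnreal] at hr ⊢
  calc ENNReal.ofReal r ^ p⁻¹ * ENNReal.ofReal t
      ≤ ENNReal.ofReal r ^ (1 / p) * rearrangement μ f r := by
        rw [one_div]
        gcongr
        exact ofReal_le_rearrangement hr
    _ ≤ M := h r (by positivity)

lemma ofReal_rpow_mul_rearrangement_half_le (hp : 0 < p) (hs : 0 < s) :
    ENNReal.ofReal s ^ (1 / p) * rearrangement μ f (s / 2) ≤
      2 ^ (1 / p) * lorentzNorm μ p ∞ f := by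
  rw [show s = 2 * (s / 2) by ring, ENNReal.ofReal_mul zero_le_two, ENNReal.ofReal_ofNat,
    ENNReal.mul_rpow_of_nonneg _ _ (by positivity), mul_div_cancel_left₀ _ two_ne_zero, mul_assoc]
  gcongr
  exact ofReal_rpow_mul_rearrangement_le_lorentzNorm_top hp (by positivity)

lemma lorentzNorm_rpow_eq_lintegral_distribution {q : ℝ≥0∞} (hq : q ≠ ∞) (hq0 : q ≠ 0)
    (μ : Measure α) (p : ℝ) (f : α → ℝ) :
    lorentzNorm μ p q f ^ q.toReal =
      ∫⁻ t in Ioi 0, ENNReal.ofReal t ^ (q.toReal - 1) * distribution μ f t ^ (q.toReal / p) := by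
  have hr : 0 < q.toReal := ENNReal.toReal_pos hq0 hq
  rw [lorentzNorm, if_neg hq, ← ENNReal.rpow_mul, one_div_mul_cancel hr.ne', ENNReal.rpow_one]
  refine setLIntegral_congr_fun measurableSet_Ioi fun t ht => ?_
  have h0 : ENNReal.ofReal t ≠ 0 := by simpa using ht
  rw [ENNReal.mul_rpow_of_nonneg _ _ hr.le, ← ENNReal.rpow_mul, one_div_mul_eq_div,
    ENNReal.rpow_sub _ _ h0 ENNReal.ofReal_ne_top, ENNReal.rpow_one, div_eq_mul_inv,
    div_eq_mul_inv, mul_right_comm]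
  rfl

lemma ofReal_mul_lorentzNorm_rpow_eq_lintegral_rearrangement {q : ℝ≥0∞} (hp : 0 < p)
    (hq : q ≠ ∞) (hq0 : q ≠ 0)
    (μ : Measure α) (f : α → ℝ) :
    ENNReal.ofReal p * lorentzNorm μ p q f ^ q.toReal =
      ∫⁻ s in Ioi 0, ENNReal.ofReal s ^ (q.toReal / p - 1) * rearrangement μ f s ^ q.toReal := by
  have hr : 0 < q.toReal := ENNReal.toReal_pos hq0 hq
  have key := (distribution_antitone (μ := μ) f).lintegral_layercake_rpow hr (div_pos hr hp)
  rw [← lorentzNorm_rpow_eq_lintegral_distribution hq hq0, ENNReal.ofReal_div_of_pos hp] at key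
  have hr0 : ENNReal.ofReal q.toReal ≠ 0 := by positivity
  refine (ENNReal.mul_right_inj hr0 ENNReal.ofReal_ne_top).mp ?_
  rw [mul_left_comm, key, ← mul_assoc, ENNReal.mul_div_cancel (by positivity) ENNReal.ofReal_ne_top]
  rfl

lemma lorentzNorm_top_le_mul_lorentzNorm {q : ℝ≥0∞} (hp : 0 < p) (hq : 1 ≤ q) (μ : Measure α)
    (f : α → ℝ) :
    lorentzNorm μ p ∞ f ≤ ENNReal.ofReal (q.toReal + 1) * lorentzNorm μ p q f := by
  rcases eq_or_ne q ∞ with rfl | hq_top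
  · simp
  have hN := lorentzNorm_rpow_eq_lintegral_distribution hq_top (by positivity) μ p f
  set r := q.toReal
  have hr : 1 ≤ r := ENNReal.toReal_one ▸ ENNReal.toReal_mono hq_top hq
  have hr0 : 0 < r := by linarith
  rw [lorentzNorm_top_eq]
  refine iSup₂_le fun v hv => ?_
  rw [← ENNReal.rpow_le_rpow_iff hr0, ENNReal.mul_rpow_of_nonneg (ENNReal.ofReal (r + 1)) _ hr0.le,
    hN]
  calc (ENNReal.ofReal v * distribution μ f v ^ (1 / p)) ^ r
      = ∫⁻ t in Ioo 0 v, ENNReal.ofReal (r * t ^ (r - 1)) * distribution μ f v ^ (r / p) := by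
        rw [lintegral_mul_const _ (by fun_prop), lintegral_Ioo_ofReal_mul_rpow_sub_one hv.le hr0,
          ENNReal.mul_rpow_of_nonneg _ _ hr0.le, ← ENNReal.rpow_mul, one_div_mul_eq_div]
    _ ≤ ∫⁻ t in Ioo 0 v, ENNReal.ofReal (r * t ^ (r - 1)) * distribution μ f t ^ (r / p) :=
        setLIntegral_mono' measurableSet_Ioo fun t ht => by
          gcongr
          exact distribution_antitone f ht.2.le
    _ = ∫⁻ t in Ioo 0 v, ENNReal.ofReal r *
          (ENNReal.ofReal t ^ (r - 1) * distribution μ f t ^ (r / p)) :=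
        setLIntegral_congr_fun measurableSet_Ioo fun t ht => by
          rw [ofReal_mul_rpow_sub_one hr0.le ht.1, mul_assoc]
    _ ≤ ∫⁻ t in Ioi 0, ENNReal.ofReal r *
          (ENNReal.ofReal t ^ (r - 1) * distribution μ f t ^ (r / p)) :=
        lintegral_mono_set Ioo_subset_Ioi_self
    _ ≤ ENNReal.ofReal (r + 1) ^ r *
          ∫⁻ t in Ioi 0, ENNReal.ofReal t ^ (r - 1) * distribution μ f t ^ (r / p) := by
        rw [lintegral_const_mul' _ _ ENNReal.ofReal_ne_top]
        gcongr
        exact (ENNReal.ofReal_le_ofReal (by linarith)).trans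
          (ENNReal.le_rpow_self_of_one_le (by simp [hr0.le]) hr)

end Lorentz

section Holder

variable {α : Type*} [MeasurableSpace α] {μ : Measure α} {p₁ p₂ p : ℝ}

lemma pos_of_one_div_eq_add (hp₁ : 0 < p₁) (hp₂ : 0 < p₂) (hp : 1 / p = 1 / p₁ + 1 / p₂) :
    0 < p :=
  one_div_pos.mp (hp ▸ by positivity)

lemma one_le_div_of_one_div_eq_add (hp₁ : 0 < p₁) (hp₂ : 0 < p₂) (hp : 1 / p = 1 / p₁ + 1 / p₂) :
    1 ≤ p₁ / p := by
  have hp0 := pos_of_one_div_eq_add hp₁ hp₂ hp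
  rw [one_le_div hp0, ← one_div_le_one_div hp₁ hp0, hp]
  exact le_add_of_nonneg_right (by positivity)

theorem lorentzNorm_top_mul_le (hp₁ : 0 < p₁) (hp₂ : 0 < p₂) (hp : 1 / p = 1 / p₁ + 1 / p₂)
    (f g : α → ℝ) :
    lorentzNorm μ p ∞ (fun x => f x * g x) ≤
      2 ^ (1 / p) * lorentzNorm μ p₁ ∞ f * lorentzNorm μ p₂ ∞ g := by
  refine lorentzNorm_top_le_of_forall_rearrangement (pos_of_one_div_eq_add hp₁ hp₂ hp)
    fun s hs => ?_
  have hs0 : ENNReal.ofReal s ≠ 0 := by positivity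
  calc ENNReal.ofReal s ^ (1 / p) * rearrangement μ (fun x => f x * g x) s
      ≤ ENNReal.ofReal s ^ (1 / p₁) * ENNReal.ofReal s ^ (1 / p₂) *
          (rearrangement μ f (s / 2) * rearrangement μ g (s / 2)) := by
        rw [hp, ENNReal.rpow_add _ _ hs0 ENNReal.ofReal_ne_top]
        gcongr
        exact rearrangement_mul_le_half μ f g hs.le
    _ = ENNReal.ofReal s ^ (1 / p₁) * rearrangement μ f (s / 2) *
          (ENNReal.ofReal s ^ (1 / p₂) * rearrangement μ g (s / 2)) := by ring
    _ ≤ 2 ^ (1 / p₁) * lorentzNorm μ p₁ ∞ f * (2 ^ (1 / p₂) * lorentzNorm μ p₂ ∞ g) :=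
        mul_le_mul' (ofReal_rpow_mul_rearrangement_half_le hp₁ hs)
          (ofReal_rpow_mul_rearrangement_half_le hp₂ hs)
    _ = 2 ^ (1 / p) * lorentzNorm μ p₁ ∞ f * lorentzNorm μ p₂ ∞ g := by
        rw [hp, ENNReal.rpow_add _ _ two_ne_zero ENNReal.ofNat_ne_top]
        ring

theorem lorentzNorm_mul_le_of_ne_top {q : ℝ≥0∞} (hp₁ : 0 < p₁) (hp₂ : 0 < p₂)
    (hp : 1 / p = 1 / p₁ + 1 / p₂) (hq : 1 ≤ q) (hq_top : q ≠ ∞) (f g : α → ℝ) :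
    lorentzNorm μ p q (fun x => f x * g x) ≤
      ENNReal.ofReal (p₁ / p) * 2 ^ (1 / p) * lorentzNorm μ p₁ q f * lorentzNorm μ p₂ ∞ g := by
  have hp0 := pos_of_one_div_eq_add hp₁ hp₂ hp
  have hq0 : q ≠ 0 := by positivity
  have hfg := ofReal_mul_lorentzNorm_rpow_eq_lintegral_rearrangement hp0 hq_top hq0 μ
    (fun x => f x * g x)
  have hf := ofReal_mul_lorentzNorm_rpow_eq_lintegral_rearrangement hp₁ hq_top hq0 μ f
  set r := q.toReal
  have hr : 1 ≤ r := ENNReal.toReal_one ▸ ENNReal.toReal_mono hq_top hq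
  have hr0 : 0 < r := by linarith
  set W := lorentzNorm μ p₂ ∞ g
  have hpoint : ∀ s ∈ Ioi (0 : ℝ),
      ENNReal.ofReal s ^ (r / p - 1) * rearrangement μ (fun x => f x * g x) s ^ r ≤
        (2 ^ (1 / p₂) * W) ^ r *
          (ENNReal.ofReal s ^ (r / p₁ - 1) * rearrangement μ f (s / 2) ^ r) := by
    intro s hs
    have hsplit : ENNReal.ofReal s ^ (r / p - 1) =
        (ENNReal.ofReal s ^ (1 / p₂)) ^ r * ENNReal.ofReal s ^ (r / p₁ - 1) := by
      rw [← ENNReal.rpow_mul, ← ENNReal.rpow_add _ _ (by simpa using hs) ENNReal.ofReal_ne_top,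
        div_eq_mul_one_div r p, hp]
      ring_nf
    calc ENNReal.ofReal s ^ (r / p - 1) * rearrangement μ (fun x => f x * g x) s ^ r
        ≤ ENNReal.ofReal s ^ (r / p - 1) *
            (rearrangement μ f (s / 2) * rearrangement μ g (s / 2)) ^ r := by
          gcongr
          exact rearrangement_mul_le_half μ f g (le_of_lt hs)
      _ = (ENNReal.ofReal s ^ (1 / p₂) * rearrangement μ g (s / 2)) ^ r *
            (ENNReal.ofReal s ^ (r / p₁ - 1) * rearrangement μ f (s / 2) ^ r) := by
          rw [hsplit, ENNReal.mul_rpow_of_nonneg _ _ hr0.le, ENNReal.mul_rpow_of_nonneg _ _ hr0.le]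
          ring
      _ ≤ _ := by
          gcongr ?_ ^ _ * _
          exact ofReal_rpow_mul_rearrangement_half_le hp₂ hs
  have hpow : ENNReal.ofReal p * lorentzNorm μ p q (fun x => f x * g x) ^ r ≤
      ENNReal.ofReal p *
        (ENNReal.ofReal (p₁ / p) * (2 ^ (1 / p) * lorentzNorm μ p₁ q f * W) ^ r) :=
    calc ENNReal.ofReal p * lorentzNorm μ p q (fun x => f x * g x) ^ r
        ≤ ∫⁻ s in Ioi 0, (2 ^ (1 / p₂) * W) ^ r *
            (ENNReal.ofReal s ^ (r / p₁ - 1) * rearrangement μ f (s / 2) ^ r) :=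
          hfg ▸ setLIntegral_mono' measurableSet_Ioi hpoint
      _ = (2 ^ (1 / p₂) * W) ^ r *
            (2 ^ (r / p₁) * (ENNReal.ofReal p₁ * lorentzNorm μ p₁ q f ^ r)) := by
          rw [lintegral_const_mul _ (by fun_prop),
            setLIntegral_Ioi_rpow_mul_comp_div (F := fun s => rearrangement μ f s ^ r)
              (by fun_prop) two_pos, sub_add_cancel, ENNReal.ofReal_ofNat, hf]
      _ = _ := by
          rw [← mul_assoc (ENNReal.ofReal p), ← ENNReal.ofReal_mul hp0.le,
            mul_div_cancel₀ _ hp0.ne', ENNReal.mul_rpow_of_nonneg _ _ hr0.le,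
            ENNReal.mul_rpow_of_nonneg _ _ hr0.le, ENNReal.mul_rpow_of_nonneg _ _ hr0.le, hp,
            ENNReal.rpow_add _ _ two_ne_zero ENNReal.ofNat_ne_top,
            ENNReal.mul_rpow_of_nonneg _ _ hr0.le, ← ENNReal.rpow_mul 2 (1 / p₁),
            one_div_mul_eq_div]
          ring
  rw [ENNReal.mul_le_mul_iff_right (by positivity) ENNReal.ofReal_ne_top] at hpow
  rw [← ENNReal.rpow_le_rpow_iff hr0]
  calc lorentzNorm μ p q (fun x => f x * g x) ^ r
      ≤ ENNReal.ofReal (p₁ / p) ^ r * (2 ^ (1 / p) * lorentzNorm μ p₁ q f * W) ^ r := by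
        refine hpow.trans ?_
        gcongr
        exact ENNReal.le_rpow_self_of_one_le
          (ENNReal.one_le_ofReal.mpr (one_le_div_of_one_div_eq_add hp₁ hp₂ hp)) hr
    _ = (ENNReal.ofReal (p₁ / p) * 2 ^ (1 / p) * lorentzNorm μ p₁ q f * W) ^ r := by
        rw [← ENNReal.mul_rpow_of_nonneg _ _ hr0.le]
        ring_nf

theorem lorentzNorm_mul_le_mul_lorentzNorm_top {q : ℝ≥0∞} (hp₁ : 0 < p₁) (hp₂ : 0 < p₂)
    (hp : 1 / p = 1 / p₁ + 1 / p₂) (hq : 1 ≤ q) (f g : α → ℝ) :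
    lorentzNorm μ p q (fun x => f x * g x) ≤
      ENNReal.ofReal (p₁ / p) * 2 ^ (1 / p) * lorentzNorm μ p₁ q f * lorentzNorm μ p₂ ∞ g := by
  rcases eq_or_ne q ∞ with rfl | hq_top
  · refine (lorentzNorm_top_mul_le hp₁ hp₂ hp f g).trans ?_
    gcongr
    exact le_mul_of_one_le_left' (ENNReal.one_le_ofReal.mpr
      (one_le_div_of_one_div_eq_add hp₁ hp₂ hp))
  · exact lorentzNorm_mul_le_of_ne_top hp₁ hp₂ hp hq hq_top f g

theorem lorentzNorm_mul_le_of_le {q₁ q₂ : ℝ≥0∞} (hp₁ : 0 < p₁) (hp₂ : 0 < p₂)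
    (hp : 1 / p = 1 / p₁ + 1 / p₂) (hq₁ : 1 ≤ q₁) (hq : q₁ ≤ q₂) (f g : α → ℝ) :
    lorentzNorm μ p q₁ (fun x => f x * g x) ≤
      ENNReal.ofReal (p₁ / p * 2 ^ (1 / p) * (q₂.toReal + 1)) *
        lorentzNorm μ p₁ q₁ f * lorentzNorm μ p₂ q₂ g := by
  have hp0 := pos_of_one_div_eq_add hp₁ hp₂ hp
  calc lorentzNorm μ p q₁ (fun x => f x * g x)
      ≤ ENNReal.ofReal (p₁ / p) * 2 ^ (1 / p) * lorentzNorm μ p₁ q₁ f * lorentzNorm μ p₂ ∞ g :=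
        lorentzNorm_mul_le_mul_lorentzNorm_top hp₁ hp₂ hp hq₁ f g
    _ ≤ ENNReal.ofReal (p₁ / p) * 2 ^ (1 / p) * lorentzNorm μ p₁ q₁ f *
          (ENNReal.ofReal (q₂.toReal + 1) * lorentzNorm μ p₂ q₂ g) := by
        gcongr
        exact lorentzNorm_top_le_mul_lorentzNorm hp₂ (hq₁.trans hq) μ g
    _ = _ := by
        rw [ENNReal.ofReal_mul (by positivity), ENNReal.ofReal_mul (by positivity),
          ← ENNReal.ofReal_rpow_of_pos two_pos, ENNReal.ofReal_ofNat]
        ring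

end Holder

/-- **O'Neil's Hölder inequality in Lorentz spaces.**
If `1 < p₁, p₂ < ∞`, `1/p = 1/p₁ + 1/p₂`, `1 ≤ q₁, q₂ ≤ ∞` and `q = min{q₁,q₂}`, then
`‖f·g‖_{L^{p,q}} ≤ C ‖f‖_{L^{p₁,q₁}} ‖g‖_{L^{p₂,q₂}}` with `C = C(p₁,p₂,q₁,q₂)`. -/
theorem lorentz_holder (p₁ p₂ p : ℝ) (hp₁ : 1 < p₁) (hp₂ : 1 < p₂)
    (hp : 1 / p = 1 / p₁ + 1 / p₂) (q₁ q₂ : ℝ≥0∞) (hq₁ : 1 ≤ q₁) (hq₂ : 1 ≤ q₂) :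
    ∃ C : ℝ, 0 < C ∧
      ∀ (α : Type*) [MeasurableSpace α] (μ : Measure α) (f g : α → ℝ),
        lorentzNorm μ p (min q₁ q₂) (fun x => f x * g x) ≤
          ENNReal.ofReal C * lorentzNorm μ p₁ q₁ f * lorentzNorm μ p₂ q₂ g := by
  have hp₁0 : 0 < p₁ := by linarith
  have hp₂0 : 0 < p₂ := by linarith
  have hp0 := pos_of_one_div_eq_add hp₁0 hp₂0 hp
  refine ⟨max (p₁ / p * 2 ^ (1 / p) * (q₂.toReal + 1)) (p₂ / p * 2 ^ (1 / p) * (q₁.toReal + 1)),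
    lt_max_of_lt_left (by positivity), fun α _ μ f g => ?_⟩
  rcases le_total q₁ q₂ with hq | hq
  · rw [min_eq_left hq]
    refine (lorentzNorm_mul_le_of_le hp₁0 hp₂0 hp hq₁ hq f g).trans ?_
    gcongr
    exact le_max_left _ _
  · rw [min_eq_right hq, mul_right_comm (ENNReal.ofReal _)]
    simp_rw [mul_comm (f _)]
    refine (lorentzNorm_mul_le_of_le hp₂0 hp₁0 (hp.trans (add_comm _ _)) hq₂ hq g f).trans ?_
    gcongr
    exact le_max_right _ _
end

section
/- Let y : [0,T] → [1, ∞) be continuous and satisfy y(t) ≤ C exp(C exp(C ∫₀^t y(s)^N ds)) for constants C ≥ 1 and N > 0. Then there exists T₀ ∈ (0,T], depending only on C and N, such that sup_{0≤t≤T₀} y(t) ≤ C̃ for a constant C̃ depending only on C and N. -/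
open Real Set

/-- **Simon's local boundedness lemma.** Given `C ≥ 1` and `N > 0`, there
exist `T₀' > 0` and `C̃`, depending only on `C` and `N`, such that any continuous
`y : [0,T] → [1,∞)` satisfying `y(t) ≤ C exp(C exp(C ∫₀^t y^N))` is bounded by `C̃` on
`[0, min(T₀',T)]` (a nondegenerate interval `(0,T₀] ⊆ (0,T]`). -/
theorem simon_local_bound (C N : ℝ) (hC : 1 ≤ C) (hN : 0 < N) :
    ∃ T₀' : ℝ, 0 < T₀' ∧ ∃ Ctilde : ℝ,
      ∀ (T : ℝ), 0 < T →
        ∀ y : ℝ → ℝ,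
          ContinuousOn y (Set.Icc 0 T) →
          (∀ t ∈ Set.Icc 0 T, 1 ≤ y t) →
          (∀ t ∈ Set.Icc 0 T,
            y t ≤ C * Real.exp (C * Real.exp (C * ∫ s in (0:ℝ)..t, y s ^ N))) →
          ∀ t ∈ Set.Icc 0 (min T₀' T), y t ≤ Ctilde := by
  have hC0 : (0:ℝ) < C := lt_of_lt_of_le one_pos hC
  set M : ℝ := C * Real.exp (C * Real.exp C) + 1 with hMdef
  have hMpos : (0:ℝ) < M := by positivity
  refine ⟨M ^ (-N), Real.rpow_pos_of_pos hMpos _, M, ?_⟩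
  intro T hT y hy hy1 hineq
  by_contra hcon
  push_neg at hcon
  obtain ⟨t₁, ht₁, hbad⟩ := hcon
  set T₁ := min (M ^ (-N)) T with hT₁def
  have hT₁T : T₁ ≤ T := min_le_right _ _
  set B := {t ∈ Icc (0:ℝ) T₁ | M < y t} with hBdef
  have hBne : B.Nonempty := ⟨t₁, ht₁, hbad⟩
  have hBdd : BddBelow B := ⟨0, fun x hx => hx.1.1⟩
  set t₀ := sInf B with ht₀def
  have ht₀0 : 0 ≤ t₀ := le_csInf hBne (fun x hx => hx.1.1)
  have ht₀T₁ : t₀ ≤ T₁ := le_trans (csInf_le hBdd ⟨ht₁, hbad⟩) ht₁.2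
  have ht₀Icc : t₀ ∈ Icc (0:ℝ) T := ⟨ht₀0, le_trans ht₀T₁ hT₁T⟩
  -- y t₀ ≥ M by continuity from the bad set
  have hclB : t₀ ∈ closure B := csInf_mem_closure hBne hBdd
  have hBsub : B ⊆ Icc (0:ℝ) T := fun x hx => ⟨hx.1.1, le_trans hx.1.2 hT₁T⟩
  have hneB : (nhdsWithin t₀ B).NeBot := mem_closure_iff_nhdsWithin_neBot.mp hclB
  have hyM : M ≤ y t₀ := by
    have htend : Filter.Tendsto y (nhdsWithin t₀ B) (nhds (y t₀)) :=
      ((hy.continuousWithinAt ht₀Icc).mono hBsub).tendsto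
    refine ge_of_tendsto htend ?_
    filter_upwards [eventually_mem_nhdsWithin] with s hs
    exact hs.2.le
  -- below t₀ the function is bounded by M
  have hbelow : ∀ s ∈ Ico (0:ℝ) t₀, y s ≤ M := by
    intro s hs
    by_contra h
    push_neg at h
    have : s ∈ B := ⟨⟨hs.1, le_trans hs.2.le ht₀T₁⟩, h⟩
    exact absurd (csInf_le hBdd this) (not_le.mpr hs.2)
  -- the integral is at most 1
  have hI : (∫ s in (0:ℝ)..t₀, y s ^ N) ≤ 1 := by
    rcases eq_or_lt_of_le ht₀0 with h0 | h0
    · rw [← h0, intervalIntegral.integral_same]; exact zero_le_one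
    · -- y t₀ ≤ M by left continuity
      have hyMt : y t₀ ≤ M := by
        have hIcosub : Ico (0:ℝ) t₀ ⊆ Icc 0 T := fun x hx =>
          ⟨hx.1, le_trans hx.2.le ht₀Icc.2⟩
        have hcl : t₀ ∈ closure (Ico (0:ℝ) t₀) := by
          rw [closure_Ico h0.ne]; exact right_mem_Icc.mpr ht₀0
        have hne : (nhdsWithin t₀ (Ico (0:ℝ) t₀)).NeBot :=
          mem_closure_iff_nhdsWithin_neBot.mp hcl
        have htend : Filter.Tendsto y (nhdsWithin t₀ (Ico (0:ℝ) t₀)) (nhds (y t₀)) :=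
          ((hy.continuousWithinAt ht₀Icc).mono hIcosub).tendsto
        refine le_of_tendsto htend ?_
        filter_upwards [eventually_mem_nhdsWithin] with s hs
        exact hbelow s hs
      have hall : ∀ s ∈ Icc (0:ℝ) t₀, y s ≤ M := by
        intro s hs
        rcases eq_or_lt_of_le hs.2 with h | h
        · rw [h]; exact hyMt
        · exact hbelow s ⟨hs.1, h⟩
      have hIccsub : Icc (0:ℝ) t₀ ⊆ Icc 0 T := Icc_subset_Icc le_rfl ht₀Icc.2
      have hint : IntervalIntegrable (fun s => y s ^ N) MeasureTheory.volume 0 t₀ := by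
        apply ContinuousOn.intervalIntegrable
        rw [uIcc_of_le ht₀0]
        exact (hy.mono hIccsub).rpow_const (fun x hx => Or.inr hN.le)
      have hintc : IntervalIntegrable (fun _ : ℝ => M ^ N) MeasureTheory.volume 0 t₀ :=
        intervalIntegrable_const
      have hmono : (∫ s in (0:ℝ)..t₀, y s ^ N) ≤ ∫ _ in (0:ℝ)..t₀, M ^ N := by
        apply intervalIntegral.integral_mono_on ht₀0 hint hintc
        intro s hs
        have h1 : (0:ℝ) ≤ y s := le_trans zero_le_one (hy1 s (hIccsub hs))
        exact Real.rpow_le_rpow h1 (hall s hs) hN.le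
      have hconst : (∫ _ in (0:ℝ)..t₀, M ^ N) = t₀ * M ^ N := by
        simp [intervalIntegral.integral_const, smul_eq_mul]
      have hle : t₀ * M ^ N ≤ M ^ (-N) * M ^ N := by
        apply mul_le_mul_of_nonneg_right _ (Real.rpow_nonneg hMpos.le N)
        exact le_trans ht₀T₁ (min_le_left _ _)
      have hone : M ^ (-N) * M ^ N = 1 := by
        rw [← Real.rpow_add hMpos]; simp
      calc (∫ s in (0:ℝ)..t₀, y s ^ N) ≤ t₀ * M ^ N := hconst ▸ hmono
        _ ≤ 1 := hone ▸ hle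
  -- final contradiction
  have h1 : y t₀ ≤ C * Real.exp (C * Real.exp (C * ∫ s in (0:ℝ)..t₀, y s ^ N)) :=
    hineq t₀ ht₀Icc
  have h2 : C * Real.exp (C * Real.exp (C * ∫ s in (0:ℝ)..t₀, y s ^ N))
      ≤ C * Real.exp (C * Real.exp (C * 1)) := by gcongr
  rw [mul_one] at h2
  linarith
end
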